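/- arXiv:math/0508398 — 2 statements merged into one kernel-verified Lean document; each statement's English description precedes it below -/
import Mathlib

section
/- Let V be a nonzero finite-dimensional vector space over 𝕂 and let A, A* : V → V be linear maps that satisfy the cubic q-Serre relations, such that neither A nor A* is nilpotent and the only subspaces W ⊆ V with AW ⊆ W and A*W ⊆ W are 0 and V. Then A and A* are diagonalizable, and there exist an integer d ≥ 0 and nonzero scalars α, α* ∈ 𝕂 such that the set of eigenvalues of A on V is {α q^{d−2i} : 0 ≤ i ≤ d} and the set of eigenvalues of A* on V is {α* q^{d−2i} : 0 ≤ i ≤ d}. -/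
noncomputable section

/-- `[n]_q = (qⁿ − q⁻ⁿ)/(q − q⁻¹)`. -/
def qInt {K : Type*} [Field K] (q : K) (n : ℕ) : K :=
  (q ^ n - q⁻¹ ^ n) / (q - q⁻¹)

/-- `X, Y` satisfy the cubic `q`-Serre relations. -/
def QSerre {K V : Type*} [Field K] [AddCommGroup V] [Module K V]
    (q : K) (X Y : Module.End K V) : Prop :=
  X ^ 3 * Y - qInt q 3 • (X ^ 2 * Y * X) + qInt q 3 • (X * Y * X ^ 2) - Y * X ^ 3 = 0 ∧
  Y ^ 3 * X - qInt q 3 • (Y ^ 2 * X * Y) + qInt q 3 • (Y * X * Y ^ 2) - X * Y ^ 3 = 0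

/-!
On an eigenvector `x` of `A` with eigenvalue `μ ≠ 0`, the first `q`-Serre relation says that
`(A - q⁻²μ)(A - μ)(A - q²μ)` kills `B x`, so `B` maps the `μ`-eigenspace of `A` into the sum of
the eigenspaces for `q⁻²μ, μ, q²μ`: `B` is tridiagonal with respect to the eigenspaces of `A` for
`θ₀ q^(2n)`, where `θ₀ ≠ 0` is any eigenvalue (there is one since `A` is not nilpotent). The sum
of these eigenspaces is invariant under `A` and `B`, hence is `V`, and a gap in the string would
produce a proper invariant subspace; so the eigenvalues of `A` are `θ₀ q^(2n)`, `m ≤ n ≤ m + d`.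
Symmetrically, those of `B` are `φ₀ q^(2n)`, `m' ≤ n ≤ m' + d'`.

To get `d = d'`, intersect the sum `P (m + i)` of the eigenspaces of `A` of index `≤ m + i` with
the sum of the eigenspaces of `B` of index `≥ m' + i`. The resulting split decomposition `U i` is
lowered by `A` and raised by `B` (up to `U i` itself), so its sum is `V`; as `U i = 0` for
`i > d'`, this gives `V = P (m + d')`, whence `d ≤ d'`.
-/

open Module Module.End Set Function

section

variable {K V : Type*} [Field K] [AddCommGroup V] [Module K V]

def IsIrreduciblePair (A B : End K V) : Prop :=
  ∀ W : Submodule K V, W.map A ≤ W → W.map B ≤ W → W = ⊥ ∨ W = ⊤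

theorem IsIrreduciblePair.symm {A B : End K V} (h : IsIrreduciblePair A B) :
    IsIrreduciblePair B A :=
  fun W hB hA => h W hA hB

theorem IsIrreduciblePair.eq_top {A B : End K V} (h : IsIrreduciblePair A B)
    {W : Submodule K V} (hA : W.map A ≤ W) (hB : W.map B ≤ W) (hW : W ≠ ⊥) : W = ⊤ :=
  (h W hA hB).resolve_left hW

def IsTridiagonal (B : End K V) (E : ℤ → Submodule K V) : Prop :=
  ∀ n, (E n).map B ≤ E (n - 1) ⊔ E n ⊔ E (n + 1)

namespace IsTridiagonal

variable {B : End K V} {E : ℤ → Submodule K V}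

theorem comp_neg (hE : IsTridiagonal B E) : IsTridiagonal B (fun n => E (-n)) := by
  intro n
  refine (hE (-n)).trans ?_
  rw [show -n - 1 = -(n + 1) by ring, show -n + 1 = -(n - 1) by ring]
  exact le_of_eq (by dsimp only; ac_rfl)

theorem map_iSup_le (hE : IsTridiagonal B E) : (⨆ n, E n).map B ≤ ⨆ n, E n := by
  rw [Submodule.map_iSup]
  exact iSup_le fun n => (hE n).trans <|
    sup_le (sup_le (le_iSup E _) (le_iSup E _)) (le_iSup E _)

theorem map_biSup_le (hE : IsTridiagonal B E) (k : ℤ) :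
    (⨆ n ≤ k, E n).map B ≤ ⨆ n ≤ k + 1, E n := by
  simp only [Submodule.map_iSup]
  refine iSup₂_le fun n hn => (hE n).trans <| sup_le (sup_le ?_ ?_) ?_ <;>
    exact le_iSup₂_of_le _ (by omega) le_rfl

end IsTridiagonal

theorem map_eigenspace_le (A : End K V) (μ : K) : (eigenspace A μ).map A ≤ eigenspace A μ :=
  (mem_invtSubmodule_iff_map_le A).mp (eigenspace_mem_invtSubmodule A μ)

theorem map_sub_smul_biSup_eigenspace_le (A : End K V) (θ : ℤ → K) (k : ℤ) :
    (⨆ n ≤ k, eigenspace A (θ n)).map (A - θ k • 1) ≤ ⨆ n ≤ k - 1, eigenspace A (θ n) := by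
  simp only [Submodule.map_iSup]
  refine iSup₂_le fun n hn => ?_
  rintro _ ⟨x, hx, rfl⟩
  have hAx : (A - θ k • 1) x = (θ n - θ k) • x := by
    simp [mem_eigenspace_iff.mp hx, sub_smul]
  rcases hn.eq_or_lt with rfl | hlt
  · simp [hAx]
  · have hle : eigenspace A (θ n) ≤ ⨆ j ≤ k - 1, eigenspace A (θ j) :=
      le_iSup₂ (f := fun j (_ : j ≤ k - 1) => eigenspace A (θ j)) n (by omega)
    rw [hAx]
    exact Submodule.smul_mem _ _ (hle hx)

theorem eigenspace_eq_bot_of_biSup_eq_top {A : End K V} {θ : ℤ → K} (hθ : Injective θ)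
    {k n : ℤ} (htop : ⨆ j ≤ k, eigenspace A (θ j) = ⊤) (hkn : k < n) :
    eigenspace A (θ n) = ⊥ := by
  have := ((eigenspaces_iSupIndep A).comp hθ).disjoint_biSup (y := Iic k) (x := n)
    (by simpa using hkn)
  exact disjoint_top.mp (htop ▸ this)

theorem mem_range_of_hasEigenvalue {A : End K V} {θ : ℤ → K}
    (htop : ⨆ n, eigenspace A (θ n) = ⊤) {μ : K} (hμ : A.HasEigenvalue μ) : μ ∈ range θ := by
  by_contra h
  have := (eigenspaces_iSupIndep A).disjoint_biSup h
  rw [iSup_range, htop] at this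
  exact hμ (disjoint_top.mp this)

theorem hasEigenvalue_iff_mem_of_eq_image {A : End K V} {θ : ℤ → K} (hθ : Injective θ)
    {s : Set ℤ} (h : {μ | A.HasEigenvalue μ} = θ '' s) (n : ℤ) :
    A.HasEigenvalue (θ n) ↔ n ∈ s := by
  rw [← hθ.mem_set_image, ← h]
  rfl

theorem map_inf_le_sup {A : End K V} {c : K} {P P' Q Q' : Submodule K V}
    (hP : P.map (A - c • 1) ≤ P') (hQ : Q.map A ≤ Q') (hQQ' : Q ≤ Q') :
    (P ⊓ Q).map A ≤ (P' ⊓ Q') ⊔ (P ⊓ Q) := by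
  rintro _ ⟨x, ⟨hxP, hxQ⟩, rfl⟩
  have hsub : (A - c • 1) x = A x - c • x := by simp
  have hlow : (A - c • 1) x ∈ P' ⊓ Q' := ⟨hP ⟨x, hxP, rfl⟩,
    hsub ▸ Q'.sub_mem (hQ ⟨x, hxQ, rfl⟩) (Q'.smul_mem c (hQQ' hxQ))⟩
  rw [← sub_add_cancel (A x) (c • x), ← hsub]
  exact Submodule.add_mem_sup hlow (Submodule.smul_mem _ c ⟨hxP, hxQ⟩)

namespace IsIrreduciblePair

variable {A B : End K V} (hirr : IsIrreduciblePair A B)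
include hirr

theorem eq_top_of_split {P Q : ℤ → Submodule K V} (hP : Monotone P) (hQ : Monotone Q)
    {θ φ : ℤ → K} (hAP : ∀ k, (P k).map (A - θ k • 1) ≤ P (k - 1))
    (hAQ : ∀ k, (Q k).map A ≤ Q (k + 1)) (hBQ : ∀ k, (Q k).map (B - φ k • 1) ≤ Q (k - 1))
    (hBP : ∀ k, (P k).map B ≤ P (k + 1)) {a b : ℤ} {d : ℕ} (ha : P a ≠ ⊥) (hb : Q b = ⊤)
    (hbd : Q (b - d - 1) = ⊥) : P (a + d) = ⊤ := by
  set U : ℤ → Submodule K V := fun i => P (a + i) ⊓ Q (b - i) with hU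
  have hUA (i : ℤ) : (U i).map A ≤ U (i - 1) ⊔ U i := by
    have := map_inf_le_sup (hAP (a + i)) (hAQ (b - i)) (hQ (by omega))
    rwa [show a + i - 1 = a + (i - 1) by ring, show b - i + 1 = b - (i - 1) by ring] at this
  have hUB (i : ℤ) : (U i).map B ≤ U i ⊔ U (i + 1) := by
    have := map_inf_le_sup (hBQ (b - i)) (hBP (a + i)) (hP (by omega))
    rwa [show b - i - 1 = b - (i + 1) by ring, show a + i + 1 = a + (i + 1) by ring,
      inf_comm, inf_comm (Q _), sup_comm] at this
  have hU0 : P a ≤ U 0 := by simp [hU, hb]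
  have hW : ⨆ i, U i = ⊤ := by
    refine hirr.eq_top ?_ ?_ (ne_bot_of_le_ne_bot ha (hU0.trans (le_iSup U 0)))
    · rw [Submodule.map_iSup]
      exact iSup_le fun i => (hUA i).trans (sup_le (le_iSup U _) (le_iSup U _))
    · rw [Submodule.map_iSup]
      exact iSup_le fun i => (hUB i).trans (sup_le (le_iSup U _) (le_iSup U _))
  refine top_unique (hW ▸ iSup_le fun i => ?_)
  rcases le_or_gt i d with hi | hi
  · exact inf_le_left.trans (hP (by omega))
  · exact (inf_le_right.trans ((hQ (by omega)).trans hbd.le)).trans bot_le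

variable {θ : ℤ → K} (hE : IsTridiagonal B (fun n => eigenspace A (θ n)))
include hE

theorem iSup_eigenspace_comp_eq_top {k : ℤ} (hk : A.HasEigenvalue (θ k)) :
    ⨆ n, eigenspace A (θ n) = ⊤ := by
  refine hirr.eq_top ?_ hE.map_iSup_le
    (ne_bot_of_le_ne_bot hk (le_iSup (fun n => eigenspace A (θ n)) k))
  rw [Submodule.map_iSup]
  exact iSup_mono fun n => map_eigenspace_le A (θ n)

theorem iSup_eigenspace_eq_top {k : ℤ} (hk : A.HasEigenvalue (θ k)) :
    ⨆ μ, eigenspace A μ = ⊤ :=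
  top_unique <| hirr.iSup_eigenspace_comp_eq_top hE hk ▸
    iSup_le fun n => le_iSup (eigenspace A) (θ n)

theorem hasEigenvalue_of_le_of_le (hθ : Injective θ) {a b g : ℤ} (ha : A.HasEigenvalue (θ a))
    (hb : A.HasEigenvalue (θ b)) (hag : a ≤ g) (hgb : g ≤ b) : A.HasEigenvalue (θ g) := by
  by_contra hg
  have hag : a ≤ g - 1 := by
    rcases hag.eq_or_lt with rfl | h
    · exact absurd ha hg
    · omega
  set P := ⨆ n ≤ g - 1, eigenspace A (θ n)
  have hPA : P.map A ≤ P := by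
    simp only [P, Submodule.map_iSup]
    exact iSup₂_mono fun n _ => map_eigenspace_le A (θ n)
  have hPB : P.map B ≤ P := (hE.map_biSup_le (g - 1)).trans <| iSup₂_le fun n hn => by
    rcases (show n ≤ g by omega).eq_or_lt with rfl | h
    · simp [not_ne_iff.mp hg]
    · exact le_iSup₂ (f := fun j (_ : j ≤ g - 1) => eigenspace A (θ j)) n (by omega)
  have hP : P = ⊤ := hirr.eq_top hPA hPB <| ne_bot_of_le_ne_bot ha <|
    le_iSup₂ (f := fun j (_ : j ≤ g - 1) => eigenspace A (θ j)) a hag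
  exact hb (eigenspace_eq_bot_of_biSup_eq_top hθ hP (by omega))

theorem exists_setOf_hasEigenvalue_eq_image_Icc [FiniteDimensional K V] (hθ : Injective θ)
    {k : ℤ} (hk : A.HasEigenvalue (θ k)) :
    ∃ (m : ℤ) (d : ℕ), {μ | A.HasEigenvalue μ} = θ '' Icc m (m + d) := by
  set S := {n | A.HasEigenvalue (θ n)}
  have hS : S.Finite := (finite_hasEigenvalue A).preimage hθ.injOn
  obtain ⟨m, hm, hmin⟩ : ∃ m ∈ S, ∀ n ∈ S, m ≤ n := exists_min_image S id hS ⟨k, hk⟩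
  obtain ⟨M, hM, hmax⟩ : ∃ M ∈ S, ∀ n ∈ S, n ≤ M := exists_max_image S id hS ⟨k, hk⟩
  have hmM := hmin M hM
  refine ⟨m, (M - m).toNat, Set.ext fun μ => ⟨fun hμ => ?_, ?_⟩⟩
  · obtain ⟨n, rfl⟩ :=
      mem_range_of_hasEigenvalue (hirr.iSup_eigenspace_comp_eq_top hE hk) hμ
    exact ⟨n, ⟨hmin n hμ, by have := hmax n hμ; omega⟩, rfl⟩
  · rintro ⟨n, ⟨h1, h2⟩, rfl⟩
    exact hirr.hasEigenvalue_of_le_of_le hE hθ hm hM h1 (by omega)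

theorem le_of_isTridiagonal {φ : ℤ → K} (hθ : Injective θ) (hφ : Injective φ)
    (hF : IsTridiagonal A (fun n => eigenspace B (φ n))) (hBtop : ⨆ μ, eigenspace B μ = ⊤)
    {m m' : ℤ} {d d' : ℕ} (hA : {μ | A.HasEigenvalue μ} = θ '' Icc m (m + d))
    (hB : {μ | B.HasEigenvalue μ} = φ '' Icc m' (m' + d')) : d ≤ d' := by
  have hAev := hasEigenvalue_iff_mem_of_eq_image hθ hA
  have hBev := hasEigenvalue_iff_mem_of_eq_image hφ hB
  have hmono (ψ : ℤ → K) (C : End K V) : Monotone fun k => ⨆ n ≤ k, eigenspace C (ψ n) :=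
    fun k l hkl => biSup_mono fun n hn => hn.trans hkl
  -- The second filtration, `k ↦ ⨆ n ≤ k, eigenspace B (φ (-n))`, collects the eigenspaces of
  -- `B` of index `≥ -k`.
  have hPtop : ⨆ n ≤ m + d', eigenspace A (θ n) = ⊤ := by
    refine hirr.eq_top_of_split (hmono θ A) (hmono (fun n => φ (-n)) B) (b := -m')
      (map_sub_smul_biSup_eigenspace_le A θ) hF.comp_neg.map_biSup_le
      (map_sub_smul_biSup_eigenspace_le B _) hE.map_biSup_le ?_ ?_ ?_
    · exact ne_bot_of_le_ne_bot ((hAev m).mpr ⟨le_rfl, by omega⟩)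
        (le_iSup₂ (f := fun n (_ : n ≤ m) => eigenspace A (θ n)) m le_rfl)
    · refine top_unique (hBtop ▸ iSup_le fun μ => ?_)
      by_cases hμ : B.HasEigenvalue μ
      · obtain ⟨j, hj, rfl⟩ : μ ∈ φ '' Icc m' (m' + d') := hB ▸ hμ
        exact le_iSup₂_of_le (f := fun n (_ : n ≤ -m') => eigenspace B (φ (-n))) (-j)
          (by simp only [mem_Icc] at hj; omega) (by simp)
      · simp [not_ne_iff.mp hμ]
    · refine iSup₂_eq_bot.mpr fun n hn => not_ne_iff.mp ?_
      exact (hBev (-n)).not.mpr (by simp only [mem_Icc]; omega)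
  by_contra! h
  exact (hAev (m + d)).mpr ⟨by omega, le_rfl⟩
    (eigenspace_eq_bot_of_biSup_eq_top hθ hPtop (by omega))

end IsIrreduciblePair

theorem exists_hasEigenvalue_ne_zero [IsAlgClosed K] [FiniteDimensional K V]
    {A : End K V} (hA : ¬IsNilpotent A) : ∃ μ ≠ 0, A.HasEigenvalue μ := by
  by_contra! h
  refine hA (((LinearMap.charpoly_nilpotent_tfae A).out 0 2).mpr fun v => ?_)
  have hle : ⨆ μ, A.maxGenEigenspace μ ≤ A.maxGenEigenspace 0 := iSup_le fun μ => by
    rcases eq_or_ne μ 0 with rfl | hμ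
    · exact le_rfl
    · exact (not_ne_iff.mp fun hne => h μ hμ (HasUnifEigenvalue.lt zero_lt_one hne)).trans_le
        bot_le
  obtain ⟨k, hk⟩ := (mem_maxGenEigenspace A 0 v).mp
    (hle (iSup_maxGenEigenspace_eq_top A ▸ Submodule.mem_top))
  exact ⟨k, by simpa using hk⟩

open Polynomial in
theorem mem_sup_eigenspace_of_aeval_eq_zero {A : End K V} {a b c : K} (hab : a ≠ b)
    (hac : a ≠ c) (hbc : b ≠ c) {v : V}
    (hv : aeval A ((X - C a) * (X - C b) * (X - C c)) v = 0) :
    v ∈ eigenspace A a ⊔ eigenspace A b ⊔ eigenspace A c := by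
  have hker (μ : K) : LinearMap.ker (aeval A (X - C μ)) = eigenspace A μ := by
    rw [eigenspace_def, map_sub, aeval_X, aeval_C, Algebra.algebraMap_eq_smul_one]
  have hcop {μ ν : K} (h : μ ≠ ν) : IsCoprime (X - C μ) (X - C ν) :=
    isCoprime_X_sub_C_of_isUnit_sub (sub_ne_zero.mpr h).isUnit
  rw [← hker, ← hker, ← hker, sup_ker_aeval_eq_ker_aeval_mul_of_coprime _ (hcop hab),
    sup_ker_aeval_eq_ker_aeval_mul_of_coprime _ ((hcop hac).mul_left (hcop hbc))]
  exact hv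

open Polynomial in
theorem aeval_apply_eq_zero_of_serre {A B : End K V} {s : K}
    (h : A ^ 3 * B - s • (A ^ 2 * B * A) + s • (A * B * A ^ 2) - B * A ^ 3 = 0)
    {μ : K} {x : V} (hx : A x = μ • x) {a b c : K} (h1 : a + b + c = s * μ)
    (h2 : a * b + b * c + c * a = s * μ ^ 2) (h3 : a * b * c = μ ^ 3) :
    aeval A ((X - C a) * (X - C b) * (X - C c)) (B x) = 0 := by
  have hpoly : (X - C a) * (X - C b) * (X - C c) =
      X ^ 3 - C (s * μ) * X ^ 2 + C (s * μ ^ 2) * X - C (μ ^ 3) := by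
    rw [← h1, ← h2, ← h3]
    simp only [map_add, map_mul]
    ring
  have hx' := LinearMap.congr_fun h x
  simp only [LinearMap.sub_apply, LinearMap.add_apply, LinearMap.smul_apply, Module.End.mul_apply,
    pow_succ, pow_zero, one_mul, hx, map_smul, LinearMap.zero_apply] at hx'
  simp only [hpoly, map_sub, map_add, map_mul, aeval_X, aeval_C, LinearMap.sub_apply,
    LinearMap.add_apply, Module.End.mul_apply, pow_succ, pow_zero, one_mul,
    Module.algebraMap_end_apply]
  linear_combination (norm := module) hx'

theorem qInt_three {q : K} (hq : q ≠ 0) (hq2 : q ^ 2 ≠ 1) : qInt q 3 = q ^ 2 + 1 + q⁻¹ ^ 2 := by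
  have hsub : q - q⁻¹ ≠ 0 := by
    rw [sub_ne_zero]
    intro h
    apply hq2
    field_simp at h
    exact h
  rw [qInt, div_eq_iff hsub]
  field_simp
  ring

theorem injective_mul_zpow {q : K} (hq : q ≠ 0) (hq1 : ∀ n : ℕ, 0 < n → q ^ n ≠ 1) {θ₀ : K}
    (hθ₀ : θ₀ ≠ 0) : Injective fun n : ℤ => θ₀ * q ^ (2 * n) := by
  have hu : ¬IsOfFinOrder (Units.mk0 q hq) := by
    rw [isOfFinOrder_iff_pow_eq_one]
    rintro ⟨n, hn, h⟩
    exact hq1 n hn (by simpa [Units.ext_iff] using h)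
  intro m n h
  have h' : (Units.mk0 q hq) ^ (2 * m) = (Units.mk0 q hq) ^ (2 * n) := by
    ext
    simpa [hθ₀] using h
  have := injective_zpow_iff_not_isOfFinOrder.mpr hu h'
  omega

theorem QSerre.symm {q : K} {A B : End K V} (h : QSerre q A B) : QSerre q B A :=
  And.symm h

theorem QSerre.isTridiagonal {q : K} (hq : q ≠ 0) (hq1 : ∀ n : ℕ, 0 < n → q ^ n ≠ 1)
    {A B : End K V} (h : QSerre q A B) {θ₀ : K} (hθ₀ : θ₀ ≠ 0) :
    IsTridiagonal B (fun n => eigenspace A (θ₀ * q ^ (2 * n))) := by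
  have hθ := injective_mul_zpow hq hq1 hθ₀
  rintro n _ ⟨x, hx, rfl⟩
  have hnext : θ₀ * q ^ (2 * (n + 1)) = q ^ 2 * (θ₀ * q ^ (2 * n)) := by
    rw [show 2 * (n + 1) = 2 * n + (2 : ℕ) by ring, zpow_add₀ hq, zpow_natCast]
    ring
  have hprev : θ₀ * q ^ (2 * (n - 1)) = q⁻¹ ^ 2 * (θ₀ * q ^ (2 * n)) := by
    rw [show 2 * (n - 1) = 2 * n - (2 : ℕ) by ring, zpow_sub₀ hq, zpow_natCast, div_eq_mul_inv,
      inv_pow]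
    ring
  refine mem_sup_eigenspace_of_aeval_eq_zero (hθ.ne (by omega)) (hθ.ne (by omega))
    (hθ.ne (by omega)) (aeval_apply_eq_zero_of_serre h.1 (mem_eigenspace_iff.mp hx) ?_ ?_ ?_)
  all_goals
    simp only [hnext, hprev, qInt_three hq (hq1 2 two_pos)]
    field_simp
  all_goals ring

theorem image_mul_zpow_Icc {q : K} (hq : q ≠ 0) (θ₀ : K) (m : ℤ) (d : ℕ) :
    (fun n : ℤ => θ₀ * q ^ (2 * n)) '' Icc m (m + d) =
      {μ | ∃ i : Fin (d + 1), μ = θ₀ * q ^ (2 * m + d) * q ^ ((d : ℤ) - 2 * (i : ℕ))} := by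
  ext μ
  constructor
  · rintro ⟨n, ⟨h1, h2⟩, rfl⟩
    refine ⟨⟨(m + d - n).toNat, by omega⟩, ?_⟩
    dsimp only
    rw [mul_assoc, ← zpow_add₀ hq]
    congr 2
    omega
  · rintro ⟨i, rfl⟩
    refine ⟨m + d - i, ⟨by omega, by omega⟩, ?_⟩
    dsimp only
    rw [mul_assoc, ← zpow_add₀ hq]
    congr 2
    ring

end

theorem statement2_general {K : Type*} [Field K] [IsAlgClosed K]
    (q : K) (hq : q ≠ 0) (hq1 : ∀ n : ℕ, 0 < n → q ^ n ≠ 1)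
    {V : Type*} [AddCommGroup V] [Module K V] [FiniteDimensional K V]
    (A B : Module.End K V) (hS : QSerre q A B)
    (hA : ¬ IsNilpotent A) (hB : ¬ IsNilpotent B)
    (hirr : ∀ W : Submodule K V, Submodule.map A W ≤ W → Submodule.map B W ≤ W →
      W = ⊥ ∨ W = ⊤) :
    (⨆ μ : K, Module.End.eigenspace A μ) = ⊤ ∧
    (⨆ μ : K, Module.End.eigenspace B μ) = ⊤ ∧
    ∃ (d : ℕ) (α αs : K), α ≠ 0 ∧ αs ≠ 0 ∧
      {μ : K | Module.End.HasEigenvalue A μ} =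
        {μ : K | ∃ i : Fin (d + 1), μ = α * q ^ ((d : ℤ) - 2 * (i : ℕ))} ∧
      {μ : K | Module.End.HasEigenvalue B μ} =
        {μ : K | ∃ i : Fin (d + 1), μ = αs * q ^ ((d : ℤ) - 2 * (i : ℕ))} := by
  have hirr : IsIrreduciblePair A B := hirr
  obtain ⟨θ₀, hθ₀, hθ₀A⟩ := exists_hasEigenvalue_ne_zero hA
  obtain ⟨φ₀, hφ₀, hφ₀B⟩ := exists_hasEigenvalue_ne_zero hB
  replace hθ₀A : A.HasEigenvalue (θ₀ * q ^ (2 * (0 : ℤ))) := by simpa using hθ₀A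
  replace hφ₀B : B.HasEigenvalue (φ₀ * q ^ (2 * (0 : ℤ))) := by simpa using hφ₀B
  have hθ := injective_mul_zpow hq hq1 hθ₀
  have hφ := injective_mul_zpow hq hq1 hφ₀
  have hE := hS.isTridiagonal hq hq1 hθ₀
  have hF := hS.symm.isTridiagonal hq hq1 hφ₀
  have hAtop := hirr.iSup_eigenspace_eq_top hE hθ₀A
  have hBtop := hirr.symm.iSup_eigenspace_eq_top hF hφ₀B
  obtain ⟨m, d, hAspec⟩ := hirr.exists_setOf_hasEigenvalue_eq_image_Icc hE hθ hθ₀A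
  obtain ⟨m', d', hBspec⟩ := hirr.symm.exists_setOf_hasEigenvalue_eq_image_Icc hF hφ hφ₀B
  obtain rfl : d = d' := le_antisymm (hirr.le_of_isTridiagonal hE hθ hφ hF hBtop hAspec hBspec)
    (hirr.symm.le_of_isTridiagonal hF hφ hθ hE hAtop hBspec hAspec)
  rw [hAspec, hBspec, image_mul_zpow_Icc hq, image_mul_zpow_Icc hq]
  exact ⟨hAtop, hBtop, d, _, _, mul_ne_zero hθ₀ (zpow_ne_zero _ hq),
    mul_ne_zero hφ₀ (zpow_ne_zero _ hq), rfl, rfl⟩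

/-- Corollary 2.8: if `A, A*` satisfy the cubic `q`-Serre relations, neither
is nilpotent, and the pair acts irreducibly on the nonzero finite-dimensional space `V`, then
`A` and `A*` are diagonalizable and there are `d ≥ 0` and nonzero `α, α*` such that the
eigenvalue sets of `A` and `A*` are `{α q^{d−2i} : 0 ≤ i ≤ d}` and `{α* q^{d−2i} : 0 ≤ i ≤ d}`. -/
theorem statement2 {K : Type*} [Field K] [IsAlgClosed K] [CharZero K]
    (q : K) (hq : q ≠ 0) (hq1 : ∀ n : ℕ, 0 < n → q ^ n ≠ 1)
    {V : Type*} [AddCommGroup V] [Module K V] [FiniteDimensional K V] [Nontrivial V]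
    (A B : Module.End K V) (hS : QSerre q A B)
    (hA : ¬ IsNilpotent A) (hB : ¬ IsNilpotent B)
    (hirr : ∀ W : Submodule K V, Submodule.map A W ≤ W → Submodule.map B W ≤ W →
      W = ⊥ ∨ W = ⊤) :
    (⨆ μ : K, Module.End.eigenspace A μ) = ⊤ ∧
    (⨆ μ : K, Module.End.eigenspace B μ) = ⊤ ∧
    ∃ (d : ℕ) (α αs : K), α ≠ 0 ∧ αs ≠ 0 ∧
      {μ : K | Module.End.HasEigenvalue A μ} =
        {μ : K | ∃ i : Fin (d + 1), μ = α * q ^ ((d : ℤ) - 2 * (i : ℕ))} ∧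
      {μ : K | Module.End.HasEigenvalue B μ} =
        {μ : K | ∃ i : Fin (d + 1), μ = αs * q ^ ((d : ℤ) - 2 * (i : ℕ))} :=
  statement2_general q hq hq1 A B hS hA hB hirr
end
end

section
/- Let U_0, …, U_d be a decomposition of V and let A : V → V be a linear map such that (A − q^{2i−d}I)U_i ⊆ U_{i+1} for 0 ≤ i ≤ d (where U_{d+1} = 0). Then A is diagonalizable, its set of eigenvalues on V is {q^{2i−d} : 0 ≤ i ≤ d}, and for 0 ≤ i ≤ d the eigenspace of A for the eigenvalue q^{2i−d} has the same dimension as U_i. -/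
/-!
Write `W k = U k ⊕ ⋯ ⊕ U d` and `θ k = q ^ (2k - d)`. Since `A - θ k` maps `W k` into `W (k+1)`,
rank–nullity gives `dim ker (A - θ k) ≥ dim W k - dim W (k+1) = dim U k`. As `q` is not a root of
unity the `θ k` are distinct, so the eigenspaces are independent and their dimensions add up to at
most `dim V = ∑ dim U k`. Hence every inequality is an equality and the eigenspaces span `V`.
-/

noncomputable section

/-- `U 0, …, U d` is a decomposition of `V` with diameter `d`: the `U i` with `i ≤ d` are nonzero,
`U i = 0` for `i > d`, and `V` is the (internal) direct sum of the `U i`. -/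
def IsDecomposition {K V : Type*} [Field K] [AddCommGroup V] [Module K V]
    (d : ℕ) (U : ℕ → Submodule K V) : Prop :=
  (∀ i, i ≤ d → U i ≠ ⊥) ∧ (∀ i, d < i → U i = ⊥) ∧
  (⨆ i, U i) = ⊤ ∧
  ∀ i, Disjoint (U i) (⨆ j, ⨆ _ : j ≠ i, U j)

open Module Submodule Module.End

theorem iSupIndep.finrank_biSup {K V ι : Type*} [Field K] [AddCommGroup V] [Module K V]
    [FiniteDimensional K V] {p : ι → Submodule K V} (hp : iSupIndep p) (s : Finset ι) :
    finrank K ↥(⨆ i ∈ s, p i) = ∑ i ∈ s, finrank K (p i) := by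
  classical
  induction s using Finset.induction with
  | empty => simp
  | insert a s ha ih =>
    have hdisj : Disjoint (p a) (⨆ i ∈ s, p i) := by
      simpa using hp.disjoint_biSup (y := ↑s) (by simpa using ha)
    rw [Finset.iSup_insert, Finset.sum_insert ha, ← ih, ← finrank_sup_add_finrank_inf_eq,
      hdisj.eq_bot, finrank_bot, add_zero]

theorem zpow_injective_of_pow_ne_one {G₀ : Type*} [GroupWithZero G₀] {q : G₀} (hq : q ≠ 0)
    (hq1 : ∀ n : ℕ, 0 < n → q ^ n ≠ 1) : Function.Injective (q ^ · : ℤ → G₀) := by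
  intro m n (hmn : q ^ m = q ^ n)
  by_contra hne
  have hfin : IsOfFinOrder q :=
    isOfFinOrder_iff_zpow_eq_one.2
      ⟨m - n, sub_ne_zero.2 hne, by rw [zpow_sub₀ hq, hmn, div_self (zpow_ne_zero n hq)]⟩
  obtain ⟨k, hk, hqk⟩ := isOfFinOrder_iff_pow_eq_one.1 hfin
  exact hq1 k hk hqk

namespace Module.End

variable {K V ι : Type*} [Field K] [AddCommGroup V] [Module K V] {A : End K V} {θ : ι → K}

theorem finrank_le_finrank_eigenspace_add [FiniteDimensional K V] {μ : K} {W W' : Submodule K V}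
    (h : ∀ v ∈ W, A v - μ • v ∈ W') :
    finrank K W ≤ finrank K (eigenspace A μ) + finrank K W' := by
  let f : W →ₗ[K] W' := (A - μ • 1).restrict (by simpa using h)
  let g : LinearMap.ker f →ₗ[K] eigenspace A μ :=
    (W.subtype ∘ₗ (LinearMap.ker f).subtype).codRestrict _ fun ⟨v, hv⟩ => by
      simpa [f, mem_eigenspace_iff, sub_eq_zero, Subtype.ext_iff] using hv
  have hg : Function.Injective g := fun x y hxy =>
    Subtype.ext <| Subtype.ext <| congrArg (Subtype.val : eigenspace A μ → V) hxy
  calc finrank K W = finrank K (LinearMap.ker f) + finrank K (LinearMap.range f) := by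
        rw [add_comm, LinearMap.finrank_range_add_finrank_ker]
    _ ≤ finrank K (eigenspace A μ) + finrank K W' :=
        add_le_add (LinearMap.finrank_le_finrank_of_injective hg) (Submodule.finrank_le _)

theorem biSup_eigenspace_eq_top_of_le_finrank [FiniteDimensional K V] {s : Finset ι}
    (hθ : Set.InjOn θ s) {n : ι → ℕ} (hn : ∑ i ∈ s, n i = finrank K V)
    (hle : ∀ i ∈ s, n i ≤ finrank K (eigenspace A (θ i))) :
    (⨆ i ∈ s, eigenspace A (θ i)) = ⊤ ∧ ∀ i ∈ s, finrank K (eigenspace A (θ i)) = n i := by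
  classical
  have hsum : finrank K ↥(⨆ i ∈ s, eigenspace A (θ i)) =
      ∑ i ∈ s, finrank K (eigenspace A (θ i)) := by
    rw [← Finset.iSup_finset_image, (eigenspaces_iSupIndep A).finrank_biSup, Finset.sum_image hθ]
  have heq : ∑ i ∈ s, n i = ∑ i ∈ s, finrank K (eigenspace A (θ i)) :=
    le_antisymm (Finset.sum_le_sum hle) (hn ▸ hsum ▸ Submodule.finrank_le _)
  exact ⟨eq_top_of_finrank_eq (hsum.trans (heq.symm.trans hn)),
    fun i hi => ((Finset.sum_eq_sum_iff_of_le hle).1 heq i hi).symm⟩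

theorem HasEigenvalue.exists_eq_of_biSup_eigenspace_eq_top {s : Set ι}
    (htop : (⨆ i ∈ s, eigenspace A (θ i)) = ⊤) {μ : K} (hμ : HasEigenvalue A μ) :
    ∃ i ∈ s, μ = θ i := by
  by_contra! h
  have hdisj : Disjoint (eigenspace A μ) (⨆ ν ∈ θ '' s, eigenspace A ν) :=
    (eigenspaces_iSupIndep A).disjoint_biSup fun ⟨i, hi, hθi⟩ => h i hi hθi.symm
  rw [iSup_image, htop, disjoint_top] at hdisj
  exact hasEigenvalue_iff.1 hμ hdisj

end Module.End

namespace IsDecomposition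

variable {K V : Type*} [Field K] [AddCommGroup V] [Module K V] {d : ℕ} {U : ℕ → Submodule K V}

theorem iSupIndep (hU : IsDecomposition d U) : iSupIndep U := hU.2.2.2

theorem biSup_range_eq_top (hU : IsDecomposition d U) : ⨆ i ∈ Finset.range (d + 1), U i = ⊤ := by
  refine top_unique (hU.2.2.1 ▸ iSup_le fun i => ?_)
  rcases le_or_gt i d with hi | hi
  · exact le_biSup U (Finset.mem_range_succ_iff.2 hi)
  · exact hU.2.1 i hi ▸ bot_le

theorem sum_finrank [FiniteDimensional K V] (hU : IsDecomposition d U) :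
    ∑ i ∈ Finset.range (d + 1), finrank K (U i) = finrank K V := by
  rw [← hU.iSupIndep.finrank_biSup, hU.biSup_range_eq_top, finrank_top]

variable {A : End K V} {θ : ℕ → K}

theorem sub_smul_mem_biSup_Ico (hU : IsDecomposition d U)
    (hA : ∀ i, i ≤ d → ∀ u ∈ U i, A u - θ i • u ∈ U (i + 1)) {k : ℕ} {v : V}
    (hv : v ∈ ⨆ j ∈ Finset.Ico k (d + 1), U j) :
    A v - θ k • v ∈ ⨆ j ∈ Finset.Ico (k + 1) (d + 1), U j := by
  set T := ⨆ j ∈ Finset.Ico (k + 1) (d + 1), U j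
  have hUT : ∀ j, k < j → U j ≤ T := fun j hkj => by
    rcases le_or_gt j d with hj | hj
    · exact le_biSup U (Finset.mem_Ico.2 ⟨hkj, Nat.lt_add_one_of_le hj⟩)
    · exact hU.2.1 j hj ▸ bot_le
  suffices h : (⨆ j ∈ Finset.Ico k (d + 1), U j) ≤ T.comap (A - θ k • 1) by simpa using h hv
  refine iSup₂_le fun j hj u hu => ?_
  obtain ⟨hkj, hjd⟩ := Finset.mem_Ico.1 hj
  have hsplit : A u - θ k • u = (A u - θ j • u) + (θ j - θ k) • u := by
    rw [sub_smul]; abel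
  simp only [mem_comap, LinearMap.sub_apply, LinearMap.smul_apply, End.one_apply, hsplit]
  refine add_mem (hUT (j + 1) (by omega) (hA j (by omega) u hu)) ?_
  rcases hkj.eq_or_lt with rfl | hlt
  · simp
  · exact T.smul_mem _ (hUT j hlt hu)

theorem finrank_le_finrank_eigenspace [FiniteDimensional K V] (hU : IsDecomposition d U)
    (hA : ∀ i, i ≤ d → ∀ u ∈ U i, A u - θ i • u ∈ U (i + 1)) {k : ℕ} (hk : k ≤ d) :
    finrank K (U k) ≤ finrank K (eigenspace A (θ k)) := by
  have hle := finrank_le_finrank_eigenspace_add fun v hv =>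
    hU.sub_smul_mem_biSup_Ico (k := k) hA hv
  rw [hU.iSupIndep.finrank_biSup, hU.iSupIndep.finrank_biSup,
    ← Finset.insert_Ico_add_one_left_eq_Ico (Nat.lt_add_one_of_le hk),
    Finset.sum_insert (by simp)] at hle
  omega

end IsDecomposition

theorem statement4_general {K : Type*} [Field K]
    (q : K) (hq : q ≠ 0) (hq1 : ∀ n : ℕ, 0 < n → q ^ n ≠ 1)
    {V : Type*} [AddCommGroup V] [Module K V] [FiniteDimensional K V]
    (d : ℕ) (U : ℕ → Submodule K V) (hU : IsDecomposition d U)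
    (A : Module.End K V)
    (hA : ∀ i, i ≤ d → ∀ u ∈ U i, A u - q ^ (2 * (i : ℤ) - d) • u ∈ U (i + 1)) :
    (⨆ μ : K, Module.End.eigenspace A μ) = ⊤ ∧
    {μ : K | Module.End.HasEigenvalue A μ} =
      {μ : K | ∃ i, i ≤ d ∧ μ = q ^ (2 * (i : ℤ) - d)} ∧
    ∀ i, i ≤ d →
      Module.finrank K (Module.End.eigenspace A (q ^ (2 * (i : ℤ) - d))) =
        Module.finrank K (U i) := by
  set θ : ℕ → K := fun i => q ^ (2 * (i : ℤ) - d)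
  have hθ : Set.InjOn θ (Finset.range (d + 1)) := fun i _ j _ h => by
    have := zpow_injective_of_pow_ne_one hq hq1 h
    omega
  obtain ⟨htop, hrank⟩ := biSup_eigenspace_eq_top_of_le_finrank hθ hU.sum_finrank
    fun i hi => hU.finrank_le_finrank_eigenspace hA (Finset.mem_range_succ_iff.1 hi)
  refine ⟨top_unique (htop ▸ iSup₂_le fun i _ => le_iSup (eigenspace A) (θ i)),
    Set.ext fun μ => ⟨fun hμ => ?_, ?_⟩, fun i hi => hrank i (Finset.mem_range_succ_iff.2 hi)⟩
  · obtain ⟨i, hi, rfl⟩ := HasEigenvalue.exists_eq_of_biSup_eigenspace_eq_top htop hμ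
    exact ⟨i, Finset.mem_range_succ_iff.1 hi, rfl⟩
  · rintro ⟨i, hi, rfl⟩
    refine hasEigenvalue_iff.2 fun hbot => hU.1 i hi ?_
    rw [← Submodule.finrank_eq_zero, ← hrank i (Finset.mem_range_succ_iff.2 hi)]
    exact hbot ▸ finrank_bot K V

/-- Lemma 6.6: if `(A − q^{2i−d} I) U_i ⊆ U_{i+1}` for `0 ≤ i ≤ d`, then `A` is
diagonalizable with eigenvalue set `{q^{2i−d} : 0 ≤ i ≤ d}`, and the eigenspace for `q^{2i−d}` has
the same dimension as `U_i`. -/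
theorem statement4 {K : Type*} [Field K] [IsAlgClosed K] [CharZero K]
    (q : K) (hq : q ≠ 0) (hq1 : ∀ n : ℕ, 0 < n → q ^ n ≠ 1)
    {V : Type*} [AddCommGroup V] [Module K V] [FiniteDimensional K V]
    (d : ℕ) (U : ℕ → Submodule K V) (hU : IsDecomposition d U)
    (A : Module.End K V)
    (hA : ∀ i, i ≤ d → ∀ u ∈ U i, A u - q ^ (2 * (i : ℤ) - d) • u ∈ U (i + 1)) :
    (⨆ μ : K, Module.End.eigenspace A μ) = ⊤ ∧
    {μ : K | Module.End.HasEigenvalue A μ} =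
      {μ : K | ∃ i, i ≤ d ∧ μ = q ^ (2 * (i : ℤ) - d)} ∧
    ∀ i, i ≤ d →
      Module.finrank K (Module.End.eigenspace A (q ^ (2 * (i : ℤ) - d))) =
        Module.finrank K (U i) :=
  statement4_general q hq hq1 d U hU A hA
end
end
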